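/- Let 0<p<∞ and φ∈𝒢_p with φ(1)=1 and lim_{t→0+} φ(t)=0. If lim_{t→∞} t^{-n/p} φ(t) = 0, then 𝔈_G ℳ_{φ,p}(ℝ^n)(t) = ∞ for every t>0. -/

import Mathlib

open MeasureTheory Filter Set ENNReal

noncomputable section

abbrev En (n : ℕ) := EuclideanSpace ℝ (Fin n)

/-- The class `𝒢_p`: nondecreasing positive functions on `(0,∞)` such that
`t ↦ φ(t) t^{-n/p}` is nonincreasing. -/
def GClass (n : ℕ) (p : ℝ) (φ : ℝ → ℝ) : Prop :=
  (∀ t : ℝ, 0 < t → 0 < φ t) ∧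
    ∀ t r : ℝ, 0 < t → t ≤ r → φ t ≤ φ r ∧ φ r ≤ φ t * (r / t) ^ ((n : ℝ) / p)

/-- The axis-parallel compact cube centred at `x` with side length `r`. -/
def cube (n : ℕ) (x : En n) (r : ℝ) : Set (En n) := {y | ∀ i, |y i - x i| ≤ r / 2}

/-- The generalised Morrey quasi-norm `‖f | ℳ_{φ,p}(ℝⁿ)‖`. -/
def morreyNorm {F : Type*} [NormedAddCommGroup F] (n : ℕ) (p : ℝ) (φ : ℝ → ℝ)
    (f : En n → F) : ℝ≥0∞ :=
  ⨆ (x : En n) (r : ℝ) (_ : 0 < r),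
    ENNReal.ofReal (φ r) *
      ((volume (cube n x r))⁻¹ *
        ∫⁻ y in cube n x r, ENNReal.ofReal (‖f y‖ ^ p)) ^ (1 / p)

/-- The decreasing rearrangement `f*(t) = inf{σ>0 : |{x : |f(x)|>σ}| ≤ t}`. -/
def rearr {F : Type*} [NormedAddCommGroup F] (n : ℕ) (f : En n → F) (t : ℝ) : ℝ≥0∞ :=
  sInf {σ : ℝ≥0∞ | 0 < σ ∧ volume {x : En n | σ < ENNReal.ofReal ‖f x‖} ≤ ENNReal.ofReal t}

/-- The growth envelope function of the generalised Morrey space `ℳ_{φ,p}(ℝⁿ)`. -/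
def morreyEnvelope (n : ℕ) (p : ℝ) (φ : ℝ → ℝ) (t : ℝ) : ℝ≥0∞ :=
  ⨆ (f : En n → ℝ) (_ : Measurable f) (_ : morreyNorm n p φ f ≤ 1), rearr n f t

end

/-! Fix a height `M`. Choose `δ` so small that `3 (φ(δ) M)^p ≤ 1` (as `φ(0+) = 0`), `N` with
`N δⁿ > t`, and `D` so large that `(φ(r) M)^p N δⁿ ≤ rⁿ` for `r ≥ D` (as `φ(r) r^{-n/p} → 0`).
Let `f` be `M` times the indicator of `N` cubes of side `δ` placed on a line at mutual distance
`D`. Then `f*(t) ≥ M`, while `‖f | ℳ_{φ,p}‖ ≤ 1`: a cube of side `r ≤ D` meets at most three of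
the small cubes, each in measure at most `min(r, δ)ⁿ`, which the growth condition on `φ` and the
choice of `δ` control; a cube of side `r ≥ D` meets them in measure at most `N δⁿ`, which the
choice of `D` controls. As `M` is arbitrary, the envelope is infinite. -/

open Topology

section Cubes

variable {n : ℕ}

lemma cube_eq_preimage (x : En n) (r : ℝ) :
    cube n x r = (MeasurableEquiv.toLp 2 (Fin n → ℝ)).symm ⁻¹'
      Set.univ.pi fun i => Icc (x i - r / 2) (x i + r / 2) := by
  ext y
  have hy : ∀ i, (MeasurableEquiv.toLp 2 (Fin n → ℝ)).symm y i = y i := fun _ => rfl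
  simp only [cube, mem_preimage, mem_univ_pi, mem_ofPred_eq, mem_Icc, abs_le, hy]
  exact forall_congr' fun i => by constructor <;> rintro ⟨h₁, h₂⟩ <;> constructor <;> linarith

lemma measurableSet_cube (x : En n) (r : ℝ) : MeasurableSet (cube n x r) := by
  rw [cube_eq_preimage]
  exact (MeasurableSet.univ_pi fun _ => measurableSet_Icc).preimage (MeasurableEquiv.measurable _)

lemma volume_cube (x : En n) (r : ℝ) : volume (cube n x r) = ENNReal.ofReal r ^ n := by
  rw [cube_eq_preimage,
    (EuclideanSpace.volume_preserving_symm_measurableEquiv_toLp (Fin n)).measure_preimage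
      (MeasurableSet.univ_pi fun _ => measurableSet_Icc).nullMeasurableSet,
    volume_pi_pi]
  simp only [Real.volume_Icc, add_sub_sub_cancel, add_halves, Finset.prod_const, Finset.card_univ,
    Fintype.card_fin]

lemma abs_sub_le_of_cube_inter_nonempty {x y : En n} {r s : ℝ}
    (h : (cube n x r ∩ cube n y s).Nonempty) (i : Fin n) : |x i - y i| ≤ (r + s) / 2 := by
  obtain ⟨z, hzx, hzy⟩ := h
  have := abs_sub_le (x i) (z i) (y i)
  have := hzx i
  have := hzy i
  rw [abs_sub_comm (z i) (x i)] at *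
  linarith

end Cubes

lemma card_le_of_forall_sub_le (J : Finset ℕ) {L : ℝ} (hL : 0 ≤ L)
    (h : ∀ i ∈ J, ∀ j ∈ J, (i : ℝ) - j ≤ L) : (J.card : ℝ) ≤ L + 1 := by
  rcases J.eq_empty_or_nonempty with rfl | hJ
  · simp only [Finset.card_empty, Nat.cast_zero]; linarith
  set a := J.min' hJ
  have hsub : J ⊆ Finset.Icc a (a + ⌊L⌋₊) := fun j hj => by
    have haj : a ≤ j := J.min'_le j hj
    have : ((j - a : ℕ) : ℝ) ≤ L := by
      rw [Nat.cast_sub haj]; exact h j hj a (J.min'_mem hJ)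
    have := Nat.le_floor this
    rw [Finset.mem_Icc]; omega
  calc (J.card : ℝ) ≤ (Finset.Icc a (a + ⌊L⌋₊)).card := by exact_mod_cast Finset.card_le_card hsub
    _ = ⌊L⌋₊ + 1 := by
      rw [Nat.card_Icc, show a + ⌊L⌋₊ + 1 - a = ⌊L⌋₊ + 1 by omega]; push_cast; rfl
    _ ≤ L + 1 := by gcongr; exact Nat.floor_le hL

section CubeRow

variable {n : ℕ}

def cubeRow (i : Fin n) (D δ : ℝ) (N : ℕ) : Set (En n) :=
  ⋃ j ∈ Finset.range N, cube n (EuclideanSpace.single i (j * D)) δ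

lemma measurableSet_cubeRow (i : Fin n) (D δ : ℝ) (N : ℕ) : MeasurableSet (cubeRow i D δ N) :=
  Finset.measurableSet_biUnion _ fun _ _ => measurableSet_cube _ _

lemma pairwiseDisjoint_cubeRow {i : Fin n} {D δ : ℝ} (hδD : δ < D) (N : ℕ) :
    (Finset.range N : Set ℕ).PairwiseDisjoint
      fun j => cube n (EuclideanSpace.single i ((j : ℝ) * D)) δ := by
  intro j _ k _ hjk
  refine Set.disjoint_iff_inter_eq_empty.2 (Set.not_nonempty_iff_eq_empty.1 fun h => ?_)
  have hclose := abs_sub_le_of_cube_inter_nonempty h i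
  have hsep : (1 : ℝ) ≤ |(j : ℝ) - k| := by
    exact_mod_cast Int.one_le_abs (sub_ne_zero.2 (Int.natCast_inj.not.2 hjk))
  simp only [PiLp.single_apply, ↓reduceIte, ← sub_mul, abs_mul] at hclose
  nlinarith [abs_nonneg D, le_abs_self D]

lemma volume_cubeRow (i : Fin n) {D δ : ℝ} (hδ : 0 ≤ δ) (hδD : δ < D) (N : ℕ) :
    volume (cubeRow i D δ N) = ENNReal.ofReal (N * δ ^ n) := by
  rw [cubeRow, measure_biUnion_finset (pairwiseDisjoint_cubeRow hδD N)
    fun _ _ => measurableSet_cube _ _]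
  simp only [volume_cube, Finset.sum_const, Finset.card_range, nsmul_eq_mul]
  rw [ENNReal.ofReal_mul (Nat.cast_nonneg N), ENNReal.ofReal_natCast, ENNReal.ofReal_pow hδ]

lemma volume_cubeRow_inter_cube_le (i : Fin n) {D δ r : ℝ} (hD : 0 < D) (hδ : 0 ≤ δ)
    (hr : 0 ≤ r) (N : ℕ) (x : En n) :
    volume (cubeRow i D δ N ∩ cube n x r) ≤
      ENNReal.ofReal (((r + δ) / D + 1) * min r δ ^ n) := by
  classical
  set c : ℕ → En n := fun j => EuclideanSpace.single i ((j : ℝ) * D)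
  set J := (Finset.range N).filter fun j => (cube n (c j) δ ∩ cube n x r).Nonempty
  have hcover : cubeRow i D δ N ∩ cube n x r ⊆ ⋃ j ∈ J, cube n (c j) δ ∩ cube n x r := by
    rintro y ⟨hy, hyx⟩
    obtain ⟨j, hj, hyj⟩ := mem_iUnion₂.1 hy
    exact mem_biUnion (Finset.mem_filter.2 ⟨hj, y, hyj, hyx⟩) ⟨hyj, hyx⟩
  have hpiece : ∀ j, volume (cube n (c j) δ ∩ cube n x r) ≤ ENNReal.ofReal (min r δ ^ n) := by
    intro j
    rcases le_total r δ with h | h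
    · rw [min_eq_left h, ENNReal.ofReal_pow hr, ← volume_cube x]
      exact measure_mono inter_subset_right
    · rw [min_eq_right h, ENNReal.ofReal_pow hδ, ← volume_cube (c j)]
      exact measure_mono inter_subset_left
  have hcard : (J.card : ℝ) ≤ (r + δ) / D + 1 := by
    refine card_le_of_forall_sub_le J (by positivity) fun j hj k hk => ?_
    have hj := abs_sub_le_of_cube_inter_nonempty (Finset.mem_filter.1 hj).2 i
    have hk := abs_sub_le_of_cube_inter_nonempty (Finset.mem_filter.1 hk).2 i
    simp only [c, PiLp.single_apply, ↓reduceIte] at hj hk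
    rw [le_div_iff₀ hD, sub_mul]
    linarith [(abs_le.1 hj).2, (abs_le.1 hk).1]
  calc volume (cubeRow i D δ N ∩ cube n x r)
      ≤ ∑ j ∈ J, volume (cube n (c j) δ ∩ cube n x r) :=
        (measure_mono hcover).trans (measure_biUnion_finset_le _ _)
    _ ≤ ∑ _j ∈ J, ENNReal.ofReal (min r δ ^ n) := Finset.sum_le_sum fun j _ => hpiece j
    _ = ENNReal.ofReal (J.card * min r δ ^ n) := by
        rw [Finset.sum_const, nsmul_eq_mul, ENNReal.ofReal_mul (Nat.cast_nonneg _),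
          ENNReal.ofReal_natCast]
    _ ≤ ENNReal.ofReal (((r + δ) / D + 1) * min r δ ^ n) := by gcongr

end CubeRow

section Morrey

variable {n : ℕ} {p : ℝ} {φ : ℝ → ℝ}

lemma GClass.mul_rpow_mul_pow_le (hφ : GClass n p φ) (hp : 0 < p) {c : ℝ} (hc : 0 ≤ c)
    {t r : ℝ} (ht : 0 < t) (htr : t ≤ r) : (φ r * c) ^ p * t ^ n ≤ (φ t * c) ^ p * r ^ n := by
  have hφt := (hφ.1 t ht).le
  have hφr := (hφ.1 r (ht.trans_le htr)).le
  have hrt : 0 ≤ r / t := div_nonneg (ht.le.trans htr) ht.le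
  have hpow : (φ r * c) ^ p ≤ (φ t * c) ^ p * (r / t) ^ n :=
    calc (φ r * c) ^ p ≤ (φ t * (r / t) ^ ((n : ℝ) / p) * c) ^ p := by
          gcongr; exact (hφ.2 t r ht htr).2
      _ = (φ t * c) ^ p * (r / t) ^ n := by
          rw [mul_right_comm, Real.mul_rpow (by positivity) (by positivity),
            ← Real.rpow_mul hrt, div_mul_cancel₀ _ hp.ne', Real.rpow_natCast]
  calc (φ r * c) ^ p * t ^ n ≤ (φ t * c) ^ p * (r / t) ^ n * t ^ n := by gcongr
    _ = (φ t * c) ^ p * r ^ n := by rw [div_pow, mul_assoc, div_mul_cancel₀ _ (by positivity)]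

lemma exists_mul_mul_rpow_le_one (hp : 0 < p) (hφ0 : Tendsto φ (𝓝[>] 0) (𝓝 0)) (M C : ℝ) :
    ∃ δ > 0, C * (φ δ * M) ^ p ≤ 1 := by
  have h : Tendsto (fun s => C * (φ s * M) ^ p) (𝓝[>] 0) (𝓝 0) := by
    simpa [Real.zero_rpow hp.ne'] using ((hφ0.mul_const M).rpow_const (Or.inr hp.le)).const_mul C
  obtain ⟨δ, hδ, hδ0⟩ := ((h.eventually_lt_const one_pos).and self_mem_nhdsWithin).exists
  exact ⟨δ, hδ0, hδ.le⟩

lemma exists_mul_rpow_mul_le_pow (hp : 0 < p) (hφ : ∀ r, 0 < r → 0 ≤ φ r)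
    (hinf : Tendsto (fun t : ℝ => φ t / t ^ ((n : ℝ) / p)) atTop (𝓝 0)) {M : ℝ} (hM : 0 ≤ M)
    (C : ℝ) : ∃ R, ∀ r ≥ R, (φ r * M) ^ p * C ≤ r ^ n := by
  have h : Tendsto (fun r => C * (φ r / r ^ ((n : ℝ) / p) * M) ^ p) atTop (𝓝 0) := by
    simpa [Real.zero_rpow hp.ne'] using ((hinf.mul_const M).rpow_const (Or.inr hp.le)).const_mul C
  obtain ⟨R, hR⟩ := eventually_atTop.1 ((h.eventually_lt_const one_pos).and (eventually_gt_atTop 0))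
  refine ⟨R, fun r hr => ?_⟩
  obtain ⟨hlt, hr0⟩ := hR r hr
  have hφr := hφ r hr0
  rw [div_mul_eq_mul_div, Real.div_rpow (by positivity) (by positivity), ← Real.rpow_mul hr0.le,
    div_mul_cancel₀ _ hp.ne', Real.rpow_natCast, mul_div_assoc', div_lt_one (by positivity)] at hlt
  linarith

lemma ENNReal.mul_rpow_inv_le_one {a b : ℝ≥0∞} {p : ℝ} (hp : 0 < p) (h : a ^ p * b ≤ 1) :
    a * b ^ (1 / p) ≤ 1 := by
  calc a * b ^ (1 / p) = (a ^ p * b) ^ (1 / p) := by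
        rw [ENNReal.mul_rpow_of_nonneg _ _ (by positivity), ← ENNReal.rpow_mul,
          mul_one_div_cancel hp.ne', ENNReal.rpow_one]
    _ ≤ 1 := ENNReal.rpow_le_one h (by positivity)

lemma morreyNorm_indicator_le_one {S : Set (En n)} (hS : MeasurableSet S) (hp : 0 < p) {M : ℝ}
    (hM : 0 ≤ M)
    (h : ∀ x r, 0 < r →
      ENNReal.ofReal (φ r * M) ^ p * volume (S ∩ cube n x r) ≤ ENNReal.ofReal (r ^ n)) :
    morreyNorm n p φ (S.indicator fun _ => M) ≤ 1 := by
  refine iSup_le fun x => iSup_le fun r => iSup_le fun hr => ?_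
  have hint : ∫⁻ y in cube n x r, ENNReal.ofReal (‖S.indicator (fun _ => M) y‖ ^ p) =
      ENNReal.ofReal M ^ p * volume (S ∩ cube n x r) := by
    have : (fun y => ENNReal.ofReal (‖S.indicator (fun _ => M) y‖ ^ p)) =
        S.indicator fun _ => ENNReal.ofReal M ^ p := by
      ext y
      by_cases hy : y ∈ S
      · simp [hy, abs_of_nonneg hM, ENNReal.ofReal_rpow_of_nonneg hM hp.le]
      · simp [hy, Real.zero_rpow hp.ne']
    rw [this, lintegral_indicator hS, Measure.restrict_restrict hS, setLIntegral_const]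
  have hQ : volume (cube n x r) = ENNReal.ofReal (r ^ n) := by
    rw [volume_cube, ENNReal.ofReal_pow hr.le]
  have hQ0 : ENNReal.ofReal (r ^ n) ≠ 0 := by simp [hr]
  rw [hint, hQ]
  refine ENNReal.mul_rpow_inv_le_one hp ?_
  calc ENNReal.ofReal (φ r) ^ p * ((ENNReal.ofReal (r ^ n))⁻¹ *
        (ENNReal.ofReal M ^ p * volume (S ∩ cube n x r)))
      = (ENNReal.ofReal (r ^ n))⁻¹ *
          (ENNReal.ofReal (φ r * M) ^ p * volume (S ∩ cube n x r)) := by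
        rw [ENNReal.ofReal_mul' hM, ENNReal.mul_rpow_of_nonneg _ _ hp.le]; ring
    _ ≤ (ENNReal.ofReal (r ^ n))⁻¹ * ENNReal.ofReal (r ^ n) := by gcongr; exact h x r hr
    _ = 1 := ENNReal.inv_mul_cancel hQ0 ENNReal.ofReal_ne_top

lemma ofReal_le_rearr {F : Type*} [NormedAddCommGroup F] {f : En n → F} {M t : ℝ}
    (h : ENNReal.ofReal t < volume {x | M ≤ ‖f x‖}) : ENNReal.ofReal M ≤ rearr n f t := by
  refine le_sInf fun σ ⟨_, hσ⟩ => ?_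
  by_contra! hσM
  refine (h.trans_le ((measure_mono fun x hx => ?_).trans hσ)).false
  exact hσM.trans_le (ENNReal.ofReal_le_ofReal hx)

end Morrey

lemma exists_morreyNorm_indicator_le_one {n : ℕ} (hn : 0 < n) {p : ℝ} (hp : 0 < p)
    {φ : ℝ → ℝ} (hφ : GClass n p φ) (hφ0 : Tendsto φ (𝓝[>] 0) (𝓝 0))
    (hinf : Tendsto (fun t : ℝ => φ t / t ^ ((n : ℝ) / p)) atTop (𝓝 0)) (t : ℝ) {M : ℝ}
    (hM : 0 ≤ M) : ∃ S : Set (En n), MeasurableSet S ∧ ENNReal.ofReal t < volume S ∧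
      morreyNorm n p φ (S.indicator fun _ => M) ≤ 1 := by
  obtain ⟨δ, hδ, hδφ⟩ := exists_mul_mul_rpow_le_one hp hφ0 M 3
  obtain ⟨N, hN⟩ := exists_nat_gt (max (t / δ ^ n) 0)
  have hN0 : (0 : ℝ) < N := (le_max_right _ _).trans_lt hN
  obtain ⟨R, hR⟩ := exists_mul_rpow_mul_le_pow hp (fun r hr => (hφ.1 r hr).le) hinf hM (N * δ ^ n)
  set D := max R (2 * δ)
  have hδD : δ < D := by linarith [le_max_right R (2 * δ)]
  set S := cubeRow ⟨0, hn⟩ D δ N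
  have hvolS : volume S = ENNReal.ofReal (N * δ ^ n) := volume_cubeRow _ hδ.le hδD N
  refine ⟨S, measurableSet_cubeRow _ _ _ _, ?_, morreyNorm_indicator_le_one
    (measurableSet_cubeRow _ _ _ _) hp hM fun x r hr => ?_⟩
  · rw [hvolS, ENNReal.ofReal_lt_ofReal_iff (by positivity)]
    exact (div_lt_iff₀ (by positivity)).1 ((le_max_left _ _).trans_lt hN)
  have hφr := (hφ.1 r hr).le
  suffices ∃ v, volume (S ∩ cube n x r) ≤ ENNReal.ofReal v ∧ (φ r * M) ^ p * v ≤ r ^ n by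
    obtain ⟨v, hv, hvr⟩ := this
    calc ENNReal.ofReal (φ r * M) ^ p * volume (S ∩ cube n x r)
        ≤ ENNReal.ofReal (φ r * M) ^ p * ENNReal.ofReal v := by gcongr
      _ ≤ ENNReal.ofReal (r ^ n) := by
        rw [ENNReal.ofReal_rpow_of_nonneg (by positivity) hp.le, ← ENNReal.ofReal_mul
          (by positivity)]
        exact ENNReal.ofReal_le_ofReal hvr
  rcases le_total r D with hrD | hDr
  · set m := min r δ
    have hm : 0 < m := lt_min hr hδ
    refine ⟨((r + δ) / D + 1) * m ^ n,
      volume_cubeRow_inter_cube_le _ (hδ.trans hδD) hδ.le hr.le N x, ?_⟩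
    have hthree : (r + δ) / D + 1 ≤ 3 := by
      rw [div_add_one (hδ.trans hδD).ne', div_le_iff₀ (hδ.trans hδD)]; linarith
    have hφm : (φ m * M) ^ p ≤ (φ δ * M) ^ p := by
      have hφm0 := (hφ.1 m hm).le
      gcongr
      exact (hφ.2 m δ hm (min_le_right r δ)).1
    calc (φ r * M) ^ p * (((r + δ) / D + 1) * m ^ n) ≤ 3 * ((φ r * M) ^ p * m ^ n) := by
          nlinarith [show 0 ≤ (φ r * M) ^ p * m ^ n by positivity]
      _ ≤ 3 * ((φ δ * M) ^ p * r ^ n) := by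
          gcongr 3 * ?_
          exact (hφ.mul_rpow_mul_pow_le hp hM hm (min_le_left r δ)).trans
            (mul_le_mul_of_nonneg_right hφm (by positivity))
      _ ≤ r ^ n := by nlinarith [show 0 ≤ r ^ n by positivity]
  · exact ⟨N * δ ^ n, hvolS ▸ measure_mono inter_subset_left,
      hR r ((le_max_left R (2 * δ)).trans hDr)⟩

lemma ofReal_le_morreyEnvelope {n : ℕ} (hn : 0 < n) {p : ℝ} (hp : 0 < p)
    {φ : ℝ → ℝ} (hφ : GClass n p φ) (hφ0 : Tendsto φ (𝓝[>] 0) (𝓝 0))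
    (hinf : Tendsto (fun t : ℝ => φ t / t ^ ((n : ℝ) / p)) atTop (𝓝 0)) (t : ℝ) {M : ℝ}
    (hM : 0 ≤ M) : ENNReal.ofReal M ≤ morreyEnvelope n p φ t := by
  obtain ⟨S, hS, hvol, hnorm⟩ := exists_morreyNorm_indicator_le_one hn hp hφ hφ0 hinf t hM
  have hf : Measurable (S.indicator fun _ => M) := measurable_const.indicator hS
  calc ENNReal.ofReal M ≤ rearr n (S.indicator fun _ => M) t :=
        ofReal_le_rearr (hvol.trans_le (measure_mono fun x hx => by
          simp [Set.indicator_of_mem hx, abs_of_nonneg hM]))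
    _ ≤ morreyEnvelope n p φ t := le_iSup₂_of_le _ hf (le_iSup_of_le hnorm le_rfl)

theorem statement4_general (n : ℕ) (hn : 0 < n) (p : ℝ) (hp : 0 < p) (φ : ℝ → ℝ)
    (hφ : GClass n p φ)
    (hφ0 : Filter.Tendsto φ (nhdsWithin 0 (Set.Ioi 0)) (nhds 0))
    (hinf : Filter.Tendsto (fun t : ℝ => φ t / t ^ ((n : ℝ) / p)) Filter.atTop (nhds 0)) :
    ∀ t : ℝ, 0 < t → morreyEnvelope n p φ t = ⊤ := fun t _ =>
  ENNReal.eq_top_of_forall_nnreal_le fun M => by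
    simpa using ofReal_le_morreyEnvelope hn hp hφ hφ0 hinf t M.coe_nonneg

/-- If `lim_{t→0⁺} φ(t)=0` and `lim_{t→∞} t^{-n/p} φ(t) = 0`, then the
growth envelope function of `ℳ_{φ,p}(ℝⁿ)` is identically `∞` on `(0,∞)`. -/
theorem statement4 (n : ℕ) (hn : 0 < n) (p : ℝ) (hp : 0 < p) (φ : ℝ → ℝ)
    (hφ : GClass n p φ) (hφ1 : φ 1 = 1)
    (hφ0 : Filter.Tendsto φ (nhdsWithin 0 (Set.Ioi 0)) (nhds 0))
    (hinf : Filter.Tendsto (fun t : ℝ => φ t / t ^ ((n : ℝ) / p)) Filter.atTop (nhds 0)) :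
    ∀ t : ℝ, 0 < t → morreyEnvelope n p φ t = ⊤ :=
  statement4_general n hn p hp φ hφ hφ0 hinf
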